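/- Special case of Proposition 2 (equal impairment levels): Let N ≥ 1, let X_1, …, X_N be independent rate-1 exponential random variables, let γ̃ > 0 and c > 0, and define the SNDR γ = (γ̃ ∑_{i=1}^N X_i)/(γ̃ c ∑_{i=1}^N X_i + 1). Then E[log₂(1 + γ)] ≤ log₂(1 + N/(N·c + 1/γ̃)). -/

import Mathlib

/-!
The map `s ↦ log₂ (1 + γ̃ s / (γ̃ c s + 1))` is concave on `[0, ∞)`, so it lies below its tangent
line at `s = N = E[∑ Xᵢ]`. Integrating that tangent bound against the law of `∑ Xᵢ` is Jensen's
inequality and gives the claim.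
-/

open MeasureTheory ProbabilityTheory Finset Real

lemma logb_le_logb_add_div {b x y : ℝ} (hb : 1 < b) (hx : 0 < x) (hy : 0 < y) :
    logb b y ≤ logb b x + (y - x) / (x * log b) := by
  have hlogb : 0 < log b := log_pos hb
  have hlog : log y - log x ≤ (y - x) / x := by
    have h := log_le_sub_one_of_pos (div_pos hy hx)
    rwa [log_div hy.ne' hx.ne', div_sub_one hx.ne'] at h
  rw [logb, logb, ← sub_le_iff_le_add', ← sub_div, ← div_div]
  exact div_le_div_of_nonneg_right hlog hlogb.le

noncomputable def sndr (g c s : ℝ) : ℝ := g * s / (g * c * s + 1)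

section Sndr

variable {g c : ℝ}

lemma sndr_nonneg (hg : 0 ≤ g) (hc : 0 ≤ c) {s : ℝ} (hs : 0 ≤ s) : 0 ≤ sndr g c s := by
  unfold sndr; positivity

lemma sndr_le_inv (hg : 0 ≤ g) (hc : 0 < c) {s : ℝ} (hs : 0 ≤ s) : sndr g c s ≤ c⁻¹ := by
  unfold sndr
  rw [div_le_iff₀ (by positivity)]
  field_simp
  linarith [mul_nonneg hg hs]

lemma sndr_le_tangent (hg : 0 ≤ g) (hc : 0 ≤ c) {n s : ℝ} (hn : 0 ≤ n) (hs : 0 ≤ s) :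
    sndr g c s ≤ sndr g c n + g / (g * c * n + 1) ^ 2 * (s - n) := by
  have hu : 0 < g * c * s + 1 := by positivity
  have hv : 0 < g * c * n + 1 := by positivity
  have hgap : sndr g c n + g / (g * c * n + 1) ^ 2 * (s - n) - sndr g c s
      = g ^ 2 * c * (s - n) ^ 2 / ((g * c * n + 1) ^ 2 * (g * c * s + 1)) := by
    unfold sndr; field_simp; ring
  have hgap_nonneg : 0 ≤ g ^ 2 * c * (s - n) ^ 2 / ((g * c * n + 1) ^ 2 * (g * c * s + 1)) := by
    positivity
  linarith

lemma logb_one_add_sndr_le_tangent (hg : 0 ≤ g) (hc : 0 ≤ c) {n s : ℝ} (hn : 0 ≤ n)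
    (hs : 0 ≤ s) :
    logb 2 (1 + sndr g c s) ≤ logb 2 (1 + sndr g c n) +
      g / ((g * c * n + 1) ^ 2 * (1 + sndr g c n) * log 2) * (s - n) := by
  have hn' : 0 < 1 + sndr g c n := by linarith [sndr_nonneg hg hc hn]
  have hs' : 0 < 1 + sndr g c s := by linarith [sndr_nonneg hg hc hs]
  calc logb 2 (1 + sndr g c s)
      ≤ logb 2 (1 + sndr g c n) + (sndr g c s - sndr g c n) / ((1 + sndr g c n) * log 2) := by
        simpa using logb_le_logb_add_div one_lt_two hn' hs'
    _ ≤ logb 2 (1 + sndr g c n) +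
        g / (g * c * n + 1) ^ 2 * (s - n) / ((1 + sndr g c n) * log 2) := by
        gcongr
        linarith [sndr_le_tangent hg hc hn hs]
    _ = _ := by field_simp

lemma abs_logb_one_add_sndr_le (hg : 0 ≤ g) (hc : 0 < c) {s : ℝ} (hs : 0 ≤ s) :
    |logb 2 (1 + sndr g c s)| ≤ logb 2 (1 + c⁻¹) := by
  have h0 := sndr_nonneg hg hc.le hs
  rw [abs_of_nonneg (logb_nonneg one_lt_two (by linarith))]
  exact logb_le_logb_of_le one_lt_two (by linarith) (by linarith [sndr_le_inv hg hc hs])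

lemma measurable_sndr : Measurable (sndr g c) := by
  unfold sndr; fun_prop

end Sndr

lemma integral_le_of_ae_le_affine {Ω : Type*} [MeasurableSpace Ω] {μ : Measure Ω}
    [IsProbabilityMeasure μ] {Y S : Ω → ℝ} (hY : Integrable Y μ) (hS : Integrable S μ)
    {m a k : ℝ} (hm : ∫ ω, S ω ∂μ = m) (h : ∀ᵐ ω ∂μ, Y ω ≤ a + k * (S ω - m)) :
    ∫ ω, Y ω ∂μ ≤ a := by
  have hdev : Integrable (fun ω => k * (S ω - m)) μ := (hS.sub (integrable_const _)).const_mul k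
  have hrhs : Integrable (fun ω => a + k * (S ω - m)) μ := (integrable_const a).add hdev
  refine (integral_mono_ae hY hrhs h).trans_eq ?_
  rw [integral_add (integrable_const a) hdev, integral_const_mul,
    integral_sub hS (integrable_const _), hm]
  simp

lemma integral_id_expMeasure {r : ℝ} (hr : 0 < r) : ∫ x, x ∂expMeasure r = r⁻¹ := by
  rw [expMeasure, gammaMeasure, integral_withDensity_eq_integral_toReal_smul (f := gammaPDF 1 r)
    (measurable_gammaPDFReal 1 r).ennreal_ofReal (ae_of_all _ fun _ => ENNReal.ofReal_lt_top)]
  have hIoi : ∀ x ∉ Set.Ioi (0 : ℝ), (gammaPDF 1 r x).toReal • x = 0 := by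
    intro x hx
    rcases (Set.notMem_Ioi.1 hx).lt_or_eq with h | rfl
    · simp [gammaPDF, gammaPDFReal, not_le.2 h]
    · simp
  rw [← setIntegral_eq_integral_of_forall_compl_eq_zero hIoi]
  calc ∫ x in Set.Ioi 0, (gammaPDF 1 r x).toReal • x
      = ∫ x in Set.Ioi 0, r * (x ^ ((2 : ℝ) - 1) * exp (-(r * x))) := by
        refine setIntegral_congr_fun measurableSet_Ioi fun x (hx : 0 < x) => ?_
        simp only [gammaPDF, gammaPDFReal, hx.le, if_true, smul_eq_mul]
        rw [ENNReal.toReal_ofReal (by positivity)]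
        norm_num
        ring
    _ = r⁻¹ := by
        rw [integral_const_mul, integral_rpow_mul_exp_neg_mul_Ioi two_pos hr, Gamma_two, rpow_two]
        field_simp

lemma ae_nonneg_expMeasure (r : ℝ) : ∀ᵐ x ∂expMeasure r, 0 ≤ x := by
  simp only [ae_iff, not_le]
  change expMeasure r (Set.Iio 0) = 0
  rw [expMeasure, gammaMeasure, withDensity_apply _ measurableSet_Iio]
  exact lintegral_exponentialPDF_of_nonpos le_rfl

namespace ProbabilityTheory.HasLaw

variable {Ω : Type*} [MeasurableSpace Ω] {μ : Measure Ω} {X : Ω → ℝ} {r : ℝ}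

lemma integral_eq_inv_of_expMeasure (hX : HasLaw X (expMeasure r) μ) (hr : 0 < r) :
    ∫ ω, X ω ∂μ = r⁻¹ := by
  rw [hX.integral_eq, integral_id_expMeasure hr]

lemma integrable_of_expMeasure (hX : HasLaw X (expMeasure r) μ) (hr : 0 < r) :
    Integrable X μ :=
  .of_integral_ne_zero (by rw [hX.integral_eq_inv_of_expMeasure hr]; positivity)

lemma ae_nonneg_of_expMeasure (hX : HasLaw X (expMeasure r) μ) : ∀ᵐ ω ∂μ, 0 ≤ X ω :=
  (hX.ae_iff measurableSet_Ici.mem).2 (ae_nonneg_expMeasure r)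

end ProbabilityTheory.HasLaw

theorem ergodic_capacity_upper_bound_equal_impairments_general
    {Ω : Type*} [MeasurableSpace Ω] (μ : Measure Ω) [IsProbabilityMeasure μ]
    (N : ℕ)
    (X : Fin N → Ω → ℝ)
    (hXexp : ∀ i, Measure.map (X i) μ = expMeasure 1)
    (γSNR : ℝ) (hγSNR : 0 < γSNR) (c : ℝ) (hc : 0 < c)
    (γ : Ω → ℝ)
    (hγ : ∀ ω, γ ω = (γSNR * ∑ i, X i ω) / (γSNR * c * ∑ i, X i ω + 1)) :
    ∫ ω, Real.logb 2 (1 + γ ω) ∂μ ≤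
      Real.logb 2 (1 + N / (N * c + 1 / γSNR)) := by
  have hlaw : ∀ i, HasLaw (X i) (expMeasure 1) μ := fun i =>
    ⟨.of_map_ne_zero ((hXexp i).symm ▸ (isProbabilityMeasure_expMeasure one_pos).ne_zero),
      hXexp i⟩
  set S : Ω → ℝ := fun ω => ∑ i, X i ω
  have hXint : ∀ i, Integrable (X i) μ := fun i => (hlaw i).integrable_of_expMeasure one_pos
  have hS : Integrable S μ := integrable_finsetSum _ fun i _ => hXint i
  have hSmean : ∫ ω, S ω ∂μ = N := by
    simp [S, integral_finsetSum _ fun i _ => hXint i,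
      fun i => (hlaw i).integral_eq_inv_of_expMeasure one_pos]
  have hS0 : ∀ᵐ ω ∂μ, 0 ≤ S ω := by
    filter_upwards [ae_all_iff.2 fun i => (hlaw i).ae_nonneg_of_expMeasure] with ω hω
    exact sum_nonneg fun i _ => hω i
  have hγS : γ = fun ω => sndr γSNR c (S ω) := funext hγ
  have hint : Integrable (fun ω => logb 2 (1 + sndr γSNR c (S ω))) μ := by
    refine (integrable_const (logb 2 (1 + c⁻¹))).mono' ?_ ?_
    · exact ((measurable_sndr.const_add 1).log.div_const (log 2)).comp_aemeasurable
        hS.aemeasurable |>.aestronglyMeasurable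
    · exact hS0.mono fun ω hω => abs_logb_one_add_sndr_le hγSNR.le hc hω
  have hsndrN : sndr γSNR c N = N / (N * c + 1 / γSNR) := by
    unfold sndr; field_simp
  simp only [hγS]
  rw [← hsndrN]
  exact integral_le_of_ae_le_affine hint hS hSmean
    (hS0.mono fun ω hω => logb_one_add_sndr_le_tangent hγSNR.le hc.le N.cast_nonneg hω)

/-- Special case of Proposition 2 (equal impairment levels): with SNDR
`γ ω = (γ̃ ∑ X i ω)/(γ̃ c ∑ X i ω + 1)`, `E[log₂(1+γ)] ≤ log₂(1 + N/(N c + 1/γ̃))`. -/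
theorem ergodic_capacity_upper_bound_equal_impairments
    {Ω : Type*} [MeasurableSpace Ω] (μ : Measure Ω) [IsProbabilityMeasure μ]
    (N : ℕ) (hN : 1 ≤ N)
    (X : Fin N → Ω → ℝ) (hXmeas : ∀ i, Measurable (X i))
    (hXindep : iIndepFun X μ)
    (hXexp : ∀ i, Measure.map (X i) μ = expMeasure 1)
    (γSNR : ℝ) (hγSNR : 0 < γSNR) (c : ℝ) (hc : 0 < c)
    (γ : Ω → ℝ)
    (hγ : ∀ ω, γ ω = (γSNR * ∑ i, X i ω) / (γSNR * c * ∑ i, X i ω + 1)) :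
    ∫ ω, Real.logb 2 (1 + γ ω) ∂μ ≤
      Real.logb 2 (1 + N / (N * c + 1 / γSNR)) :=
  ergodic_capacity_upper_bound_equal_impairments_general μ N X hXexp γSNR hγSNR c hc γ hγ
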